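/- Let $\gamma > d$, $\alpha \in (0,2)$, and define $f(r) = r^{-d-\alpha}\mathbf{1}_{(0,1]}(r) + r^{-\gamma}\mathbf{1}_{(1,\infty)}(r)$. Then there exists a constant $C > 0$ such that $\int_{\{|y|>1/2,\ |x-y|>1/2\}} f(|x-y|)\,f(|y|)\,dy \leq C f(|x|)$ for all $x \in \mathbb{R}^d$ with $|x| \geq 1$. -/
import Mathlib


open MeasureTheory Set Filter Real

/-- The profile `f(r) = r^{-d-α} 1_{(0,1]}(r) + r^{-γ} 1_{(1,∞)}(r)`. -/
noncomputable def jumpProfile (d : ℕ) (α γ : ℝ) (r : ℝ) : ℝ :=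
  if r ∈ Set.Ioc (0:ℝ) 1 then r ^ (-(d:ℝ) - α) else if 1 < r then r ^ (-γ) else 0

section Aux

variable {d : ℕ} {α γ : ℝ}

lemma jumpProfile_nonneg (d : ℕ) (α γ : ℝ) (r : ℝ) : 0 ≤ jumpProfile d α γ r := by
  unfold jumpProfile
  split_ifs with h1 h2
  · exact Real.rpow_nonneg h1.1.le _
  · exact Real.rpow_nonneg (by linarith) _
  · exact le_refl 0

lemma jumpProfile_measurable (d : ℕ) (α γ : ℝ) : Measurable (jumpProfile d α γ) := by
  unfold jumpProfile
  apply Measurable.ite measurableSet_Ioc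
  · fun_prop
  · apply Measurable.ite (measurableSet_lt measurable_const measurable_id) <;> fun_prop

lemma jumpProfile_exp_nonpos (d : ℕ) {α : ℝ} (hα : 0 ≤ α) : -(d:ℝ) - α ≤ 0 := by
  have : (0:ℝ) ≤ d := Nat.cast_nonneg d
  linarith

lemma jumpProfile_anti (hα : 0 ≤ α) (hγ : 0 ≤ γ) {t s : ℝ} (ht : 0 < t) (hts : t ≤ s) :
    jumpProfile d α γ s ≤ jumpProfile d α γ t := by
  have hs : 0 < s := lt_of_lt_of_le ht hts
  have hexp : -(d:ℝ) - α ≤ 0 := jumpProfile_exp_nonpos d hα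
  unfold jumpProfile
  by_cases hs1 : s ≤ 1
  · rw [if_pos (Set.mem_Ioc.mpr ⟨hs, hs1⟩), if_pos (Set.mem_Ioc.mpr ⟨ht, hts.trans hs1⟩)]
    exact Real.rpow_le_rpow_of_nonpos ht hts hexp
  · push_neg at hs1
    rw [if_neg (fun h => absurd (Set.mem_Ioc.mp h).2 (not_le.mpr hs1)), if_pos hs1]
    by_cases ht1 : t ≤ 1
    · rw [if_pos (Set.mem_Ioc.mpr ⟨ht, ht1⟩)]
      calc s ^ (-γ) ≤ 1 :=
            Real.rpow_le_one_of_one_le_of_nonpos hs1.le (by linarith)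
        _ ≤ t ^ (-(d:ℝ) - α) :=
            Real.one_le_rpow_of_pos_of_le_one_of_nonpos ht ht1 hexp
    · push_neg at ht1
      rw [if_neg (fun h => absurd (Set.mem_Ioc.mp h).2 (not_le.mpr ht1)), if_pos ht1]
      exact Real.rpow_le_rpow_of_nonpos ht hts (by linarith)

lemma jumpProfile_half_val (d : ℕ) (α γ : ℝ) :
    jumpProfile d α γ (1/2) = 2 ^ ((d:ℝ) + α) := by
  unfold jumpProfile
  rw [if_pos (Set.mem_Ioc.mpr ⟨by norm_num, by norm_num⟩), one_div,
    Real.inv_rpow (by norm_num), ← Real.rpow_neg (by norm_num)]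
  congr 1
  ring

lemma jumpProfile_le_K (hα : 0 ≤ α) (hγ : 0 ≤ γ) {r : ℝ} (hr : 1/2 ≤ r) :
    jumpProfile d α γ r ≤ 2 ^ ((d:ℝ) + α + γ) := by
  calc jumpProfile d α γ r ≤ jumpProfile d α γ (1/2) :=
        jumpProfile_anti hα hγ (by norm_num) hr
    _ = 2 ^ ((d:ℝ) + α) := jumpProfile_half_val d α γ
    _ ≤ 2 ^ ((d:ℝ) + α + γ) :=
        Real.rpow_le_rpow_of_exponent_le one_le_two (by linarith)

lemma jumpProfile_doubling (hα : 0 < α) (hγ : 0 < γ) {r : ℝ} (hr : 1 ≤ r) :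
    jumpProfile d α γ (r/2) ≤ 2 ^ ((d:ℝ) + α + γ) * jumpProfile d α γ r := by
  have hd0 : (0:ℝ) ≤ d := Nat.cast_nonneg d
  have h2 : (2:ℝ) ^ ((d:ℝ) + α + γ) * 2 ^ (-γ) = 2 ^ ((d:ℝ) + α) := by
    rw [← Real.rpow_add two_pos]; congr 1; ring
  by_cases hr2 : r ≤ 2
  · -- r/2 ∈ (0,1]
    have hA : jumpProfile d α γ (r/2) ≤ 2 ^ ((d:ℝ) + α) := by
      calc jumpProfile d α γ (r/2) ≤ jumpProfile d α γ (1/2) :=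
            jumpProfile_anti hα.le hγ.le (by norm_num) (by linarith)
        _ = 2 ^ ((d:ℝ) + α) := jumpProfile_half_val d α γ
    have hB : (2:ℝ) ^ (-γ) ≤ jumpProfile d α γ r := by
      unfold jumpProfile
      by_cases hr1 : r ≤ 1
      · rw [if_pos (Set.mem_Ioc.mpr ⟨by linarith, hr1⟩)]
        have hr1' : r = 1 := le_antisymm hr1 hr
        rw [hr1', Real.one_rpow]
        exact Real.rpow_le_one_of_one_le_of_nonpos one_le_two (by linarith)
      · push_neg at hr1
        rw [if_neg (fun h => absurd (Set.mem_Ioc.mp h).2 (not_le.mpr hr1)), if_pos hr1]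
        exact Real.rpow_le_rpow_of_nonpos (by linarith) hr2 (by linarith)
    calc jumpProfile d α γ (r/2) ≤ 2 ^ ((d:ℝ) + α) := hA
      _ = 2 ^ ((d:ℝ) + α + γ) * 2 ^ (-γ) := h2.symm
      _ ≤ 2 ^ ((d:ℝ) + α + γ) * jumpProfile d α γ r :=
          mul_le_mul_of_nonneg_left hB (Real.rpow_nonneg (by norm_num) _)
  · push_neg at hr2
    have hr2' : 1 < r / 2 := by linarith
    have hval : jumpProfile d α γ (r/2) = r ^ (-γ) * 2 ^ γ := by
      unfold jumpProfile
      rw [if_neg (fun h => absurd (Set.mem_Ioc.mp h).2 (not_le.mpr hr2')), if_pos hr2',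
        Real.div_rpow (by linarith) (by norm_num), div_eq_mul_inv,
        ← Real.rpow_neg (by norm_num), neg_neg]
    have hvalr : jumpProfile d α γ r = r ^ (-γ) := by
      unfold jumpProfile
      rw [if_neg (fun h => absurd (Set.mem_Ioc.mp h).2 (not_le.mpr (by linarith))),
        if_pos (by linarith)]
    rw [hval, hvalr, mul_comm]
    exact mul_le_mul_of_nonneg_right
      (Real.rpow_le_rpow_of_exponent_le one_le_two (by linarith))
      (Real.rpow_nonneg (by linarith) _)

lemma jumpProfile_le_decay (hα : 0 ≤ α) (hγ : 0 < γ) {r : ℝ} (hr : 1/2 ≤ r) :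
    jumpProfile d α γ r ≤ 2 ^ ((d:ℝ) + α + γ) * (1 + r) ^ (-γ) := by
  have hd0 : (0:ℝ) ≤ d := Nat.cast_nonneg d
  have h2 : (2:ℝ) ^ ((d:ℝ) + α + γ) * 2 ^ (-γ) = 2 ^ ((d:ℝ) + α) := by
    rw [← Real.rpow_add two_pos]; congr 1; ring
  by_cases hr1 : r ≤ 1
  · have hA : jumpProfile d α γ r ≤ 2 ^ ((d:ℝ) + α) :=
      (jumpProfile_anti hα hγ.le (by norm_num) hr).trans_eq (jumpProfile_half_val d α γ)
    have hB : (2:ℝ) ^ (-γ) ≤ (1 + r) ^ (-γ) :=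
      Real.rpow_le_rpow_of_nonpos (by linarith) (by linarith) (by linarith)
    calc jumpProfile d α γ r ≤ 2 ^ ((d:ℝ) + α) := hA
      _ = 2 ^ ((d:ℝ) + α + γ) * 2 ^ (-γ) := h2.symm
      _ ≤ 2 ^ ((d:ℝ) + α + γ) * (1 + r) ^ (-γ) :=
          mul_le_mul_of_nonneg_left hB (Real.rpow_nonneg (by norm_num) _)
  · push_neg at hr1
    have hvalr : jumpProfile d α γ r = r ^ (-γ) := by
      unfold jumpProfile
      rw [if_neg (fun h => absurd (Set.mem_Ioc.mp h).2 (not_le.mpr hr1)), if_pos hr1]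
    have h1 : (2:ℝ) ^ (-γ) * r ^ (-γ) ≤ (1 + r) ^ (-γ) := by
      rw [← Real.mul_rpow (by norm_num) (by linarith)]
      exact Real.rpow_le_rpow_of_nonpos (by linarith) (by linarith) (by linarith)
    have h3 : r ^ (-γ) = 2 ^ γ * (2 ^ (-γ) * r ^ (-γ)) := by
      rw [← mul_assoc, ← Real.rpow_add two_pos]
      simp
    calc jumpProfile d α γ r = 2 ^ γ * (2 ^ (-γ) * r ^ (-γ)) := hvalr.trans h3
      _ ≤ 2 ^ γ * (1 + r) ^ (-γ) :=
          mul_le_mul_of_nonneg_left h1 (Real.rpow_nonneg (by norm_num) _)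
      _ ≤ 2 ^ ((d:ℝ) + α + γ) * (1 + r) ^ (-γ) :=
          mul_le_mul_of_nonneg_right
            (Real.rpow_le_rpow_of_exponent_le one_le_two (by linarith))
            (Real.rpow_nonneg (by linarith) _)

lemma jumpProfile_integrableOn (d : ℕ) {α γ : ℝ} (hα : 0 ≤ α) (hγ : (d:ℝ) < γ) :
    IntegrableOn (fun z : EuclideanSpace ℝ (Fin d) => jumpProfile d α γ ‖z‖)
      {z : EuclideanSpace ℝ (Fin d) | 1/2 < ‖z‖} := by
  have hγ0 : 0 < γ := lt_of_le_of_lt (Nat.cast_nonneg d) hγ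
  have hint : Integrable
      (fun z : EuclideanSpace ℝ (Fin d) => 2 ^ ((d:ℝ) + α + γ) * (1 + ‖z‖) ^ (-γ)) := by
    apply (integrable_one_add_norm ?_).const_mul
    rw [finrank_euclideanSpace_fin]; exact hγ
  refine (hint.integrableOn).mono' ?_ ?_
  · exact ((jumpProfile_measurable d α γ).comp measurable_norm).aestronglyMeasurable.restrict
  · refine (ae_restrict_iff' (measurableSet_lt measurable_const measurable_norm)).mpr
      (ae_of_all _ fun z hz => ?_)
    rw [Real.norm_eq_abs, abs_of_nonneg (jumpProfile_nonneg _ _ _ _)]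
    exact jumpProfile_le_decay hα hγ0 (le_of_lt hz)

end Aux

/-- Jump-paring convolution condition (2.4) of the paper for polynomially decaying
Lévy profiles (case (L1)). -/
theorem stmt_19
    (d : ℕ) (hd : 1 ≤ d) (α γ : ℝ)
    (hα0 : 0 < α) (hα2 : α < 2) (hγ : (d : ℝ) < γ) :
    ∃ C > (0:ℝ), ∀ x : EuclideanSpace ℝ (Fin d), 1 ≤ ‖x‖ →
      (∫ y in {y : EuclideanSpace ℝ (Fin d) | 1/2 < ‖y‖ ∧ 1/2 < ‖x - y‖},
          jumpProfile d α γ ‖x - y‖ * jumpProfile d α γ ‖y‖) ≤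
        C * jumpProfile d α γ ‖x‖ := by
  have hα : 0 ≤ α := hα0.le
  have hγ0 : 0 < γ := lt_of_le_of_lt (Nat.cast_nonneg d) hγ
  set f := jumpProfile d α γ with hfdef
  set K := (2:ℝ) ^ ((d:ℝ) + α + γ) with hKdef
  have hK : 0 < K := Real.rpow_pos_of_pos two_pos _
  set T : Set (EuclideanSpace ℝ (Fin d)) := {z | 1/2 < ‖z‖} with hTdef
  have hTmeas : MeasurableSet T := measurableSet_lt measurable_const measurable_norm
  have hint : IntegrableOn (fun z => f ‖z‖) T := jumpProfile_integrableOn d hα hγ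
  set I := ∫ z in T, f ‖z‖ with hIdef
  have hI0 : 0 ≤ I :=
    setIntegral_nonneg hTmeas fun z _ => jumpProfile_nonneg d α γ ‖z‖
  refine ⟨2 * K * (I + 1), by positivity, fun x hx => ?_⟩
  have hxpos : 0 < ‖x‖ := lt_of_lt_of_le one_pos hx
  set S : Set (EuclideanSpace ℝ (Fin d)) := {y | 1/2 < ‖y‖ ∧ 1/2 < ‖x - y‖} with hSdef
  have hSmeas : MeasurableSet S :=
    (measurableSet_lt measurable_const measurable_norm).inter
      (measurableSet_lt measurable_const (measurable_const.sub measurable_id).norm)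
  set T' : Set (EuclideanSpace ℝ (Fin d)) := {y | x - y ∈ T} with hT'def
  have hT'meas : MeasurableSet T' := hTmeas.preimage (measurable_const.sub measurable_id)
  have hsubT : S ⊆ T := fun y hy => hy.1
  have hsubT' : S ⊆ T' := fun y hy => hy.2
  -- integrability of the translated profile
  have hind : Integrable (T.indicator fun z => f ‖z‖) :=
    (integrable_indicator_iff hTmeas).mpr hint
  have key : Integrable (fun y : EuclideanSpace ℝ (Fin d) =>
      T.indicator (fun z => f ‖z‖) (x - y)) := hind.comp_sub_left x
  have hintT' : IntegrableOn (fun y => f ‖x - y‖) T' := by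
    refine (key.integrableOn).congr_fun (fun y hy => ?_) hT'meas
    exact Set.indicator_of_mem (show x - y ∈ T from hy) _
  have hintS_xy : IntegrableOn (fun y => f ‖x - y‖) S := hintT'.mono_set hsubT'
  have hintS_y : IntegrableOn (fun y => f ‖y‖) S := hint.mono_set hsubT
  -- integrability of the product
  have hintS_prod : IntegrableOn (fun y => f ‖x - y‖ * f ‖y‖) S := by
    refine (hintS_xy.const_mul K).mono' ?_ ?_
    · exact (((jumpProfile_measurable d α γ).comp
          ((measurable_const.sub measurable_id).norm)).mul
          ((jumpProfile_measurable d α γ).comp measurable_norm)).aestronglyMeasurable.restrict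
    · refine (ae_restrict_iff' hSmeas).mpr (ae_of_all _ fun y hy => ?_)
      rw [Real.norm_eq_abs, abs_of_nonneg
        (mul_nonneg (jumpProfile_nonneg d α γ _) (jumpProfile_nonneg d α γ _))]
      calc f ‖x - y‖ * f ‖y‖ ≤ f ‖x - y‖ * K :=
            mul_le_mul_of_nonneg_left
              (jumpProfile_le_K hα hγ0.le hy.1.le) (jumpProfile_nonneg d α γ _)
        _ = K * f ‖x - y‖ := mul_comm _ _
  -- pointwise bound
  have hhalf : 0 < ‖x‖ / 2 := by positivity
  have hdbl : f (‖x‖ / 2) ≤ K * f ‖x‖ := jumpProfile_doubling hα0 hγ0 hx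
  have hKfx : 0 ≤ K * f ‖x‖ := mul_nonneg hK.le (jumpProfile_nonneg d α γ _)
  have hpt : ∀ y ∈ S, f ‖x - y‖ * f ‖y‖ ≤ (K * f ‖x‖) * (f ‖x - y‖ + f ‖y‖) := by
    intro y hy
    have hfy := jumpProfile_nonneg d α γ ‖y‖
    have hfxy := jumpProfile_nonneg d α γ ‖x - y‖
    rcases le_total (‖x‖ / 2) ‖y‖ with h | h
    · have h1 : f ‖y‖ ≤ K * f ‖x‖ := (jumpProfile_anti hα hγ0.le hhalf h).trans hdbl
      calc f ‖x - y‖ * f ‖y‖ ≤ f ‖x - y‖ * (K * f ‖x‖) :=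
            mul_le_mul_of_nonneg_left h1 hfxy
        _ = (K * f ‖x‖) * f ‖x - y‖ := mul_comm _ _
        _ ≤ (K * f ‖x‖) * (f ‖x - y‖ + f ‖y‖) :=
            mul_le_mul_of_nonneg_left (le_add_of_nonneg_right hfy) hKfx
    · have hxy2 : ‖x‖ / 2 ≤ ‖x - y‖ := by
        have := norm_sub_norm_le x y
        linarith
      have h1 : f ‖x - y‖ ≤ K * f ‖x‖ := (jumpProfile_anti hα hγ0.le hhalf hxy2).trans hdbl
      calc f ‖x - y‖ * f ‖y‖ ≤ (K * f ‖x‖) * f ‖y‖ :=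
            mul_le_mul_of_nonneg_right h1 hfy
        _ ≤ (K * f ‖x‖) * (f ‖x - y‖ + f ‖y‖) :=
            mul_le_mul_of_nonneg_left (le_add_of_nonneg_left hfxy) hKfx
  -- putting it together
  have step1 : (∫ y in S, f ‖x - y‖ * f ‖y‖)
      ≤ ∫ y in S, (K * f ‖x‖) * (f ‖x - y‖ + f ‖y‖) :=
    setIntegral_mono_on hintS_prod ((hintS_xy.add hintS_y).const_mul _) hSmeas hpt
  have step2 : (∫ y in S, (K * f ‖x‖) * (f ‖x - y‖ + f ‖y‖))
      = (K * f ‖x‖) * ((∫ y in S, f ‖x - y‖) + ∫ y in S, f ‖y‖) := by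
    rw [integral_const_mul, integral_add hintS_xy hintS_y]
  have step3 : (∫ y in S, f ‖y‖) ≤ I :=
    setIntegral_mono_set hint
      (Eventually.of_forall fun y => jumpProfile_nonneg d α γ ‖y‖)
      (HasSubset.Subset.eventuallyLE hsubT)
  have step4 : (∫ y in S, f ‖x - y‖) ≤ I := by
    have e1 : (∫ y in T', f ‖x - y‖) = I := by
      have e2 : (∫ y in T', f ‖x - y‖)
          = ∫ y, T.indicator (fun z => f ‖z‖) (x - y) := by
        rw [← integral_indicator hT'meas]
        congr 1
      rw [e2, integral_sub_left_eq_self (T.indicator fun z => f ‖z‖) volume x,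
        integral_indicator hTmeas]
    calc (∫ y in S, f ‖x - y‖) ≤ ∫ y in T', f ‖x - y‖ :=
        setIntegral_mono_set hintT'
          (Eventually.of_forall fun y => jumpProfile_nonneg d α γ _)
          (HasSubset.Subset.eventuallyLE hsubT')
      _ = I := e1
  calc (∫ y in S, f ‖x - y‖ * f ‖y‖)
      ≤ (K * f ‖x‖) * ((∫ y in S, f ‖x - y‖) + ∫ y in S, f ‖y‖) := by
        rw [← step2]; exact step1
    _ ≤ (K * f ‖x‖) * (I + I) :=
        mul_le_mul_of_nonneg_left (add_le_add step4 step3) hKfx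
    _ ≤ 2 * K * (I + 1) * f ‖x‖ := by
        nlinarith [mul_nonneg hK.le (jumpProfile_nonneg d α γ ‖x‖), hI0]
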